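/- Let M be symplectic, G = ∇f_M M^TM + J_{2n}M(∇f_M)^TJ_{2n}M, and for X in the tangent space T_M Sp(2n,R) define g_M(X_1,X_2) := (1/2)tr((X_1M^+)^T X_2 M^+). Then for all X in T_M Sp(2n,R): g_M(G, X) = tr((∇f_M)^T X). -/

import Mathlib

/-
Writing `B = ∇f Mᵀ`, one has `(∇f Mᵀ)⁺ = -J M ∇fᵀ J`, so `G M⁺ = B - B⁺`. The involution `A ↦ A⁺`
is self-adjoint for the Frobenius pairing `⟨A, C⟩ = tr (Aᵀ C)`, and `Y = M Ω M⁺` satisfies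
`Y⁺ = -Y`; hence `⟨B - B⁺, Y⟩ = 2 ⟨B, Y⟩`, and `⟨B, Y⟩ = tr (M ∇fᵀ M Ω M⁺) = tr (∇fᵀ M Ω)`
by cyclicity of the trace and `M⁺ M = 1`.
-/

open Matrix

noncomputable section

/-- The standard symplectic matrix `J = [[0, I],[-I, 0]]` of size `2m`. -/
def Jmat (m : ℕ) : Matrix (Fin m ⊕ Fin m) (Fin m ⊕ Fin m) ℝ :=
  Matrix.fromBlocks 0 1 (-1) 0

/-- The symplectic inverse `A⁺ = J₂ₖᵀ Aᵀ J₂ₙ` of a `2n × 2k` real matrix. -/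
def sympInv {n k : ℕ} (A : Matrix (Fin n ⊕ Fin n) (Fin k ⊕ Fin k) ℝ) :
    Matrix (Fin k ⊕ Fin k) (Fin n ⊕ Fin n) ℝ :=
  (Jmat k)ᵀ * Aᵀ * Jmat n

theorem Jmat_transpose (m : ℕ) : (Jmat m)ᵀ = -Jmat m := by
  ext (i | i) (j | j) <;> simp [Jmat, Matrix.one_apply, eq_comm]

theorem Jmat_mul_self (m : ℕ) : Jmat m * Jmat m = -1 := by
  rw [Jmat, fromBlocks_multiply]
  ext (i | i) (j | j) <;> simp [fromBlocks, Matrix.one_apply]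

theorem Jmat_mul_transpose (m : ℕ) : Jmat m * (Jmat m)ᵀ = 1 := by
  rw [Jmat_transpose, mul_neg, Jmat_mul_self, neg_neg]

theorem sympInv_mul {n k l : ℕ} (A : Matrix (Fin n ⊕ Fin n) (Fin k ⊕ Fin k) ℝ)
    (B : Matrix (Fin k ⊕ Fin k) (Fin l ⊕ Fin l) ℝ) :
    sympInv (A * B) = sympInv B * sympInv A := by
  simp only [sympInv, transpose_mul, Matrix.mul_assoc]
  rw [← Matrix.mul_assoc (Jmat k), Jmat_mul_transpose, Matrix.one_mul]

theorem sympInv_sympInv {n k : ℕ} (A : Matrix (Fin n ⊕ Fin n) (Fin k ⊕ Fin k) ℝ) :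
    sympInv (sympInv A) = A := by
  simp only [sympInv, transpose_mul, transpose_transpose, Matrix.mul_assoc]
  rw [← Matrix.mul_assoc (Jmat n)ᵀ, ← transpose_mul, Jmat_mul_self, Jmat_mul_self]
  simp

theorem trace_transpose_sympInv_mul {n k : ℕ} (A : Matrix (Fin n ⊕ Fin n) (Fin k ⊕ Fin k) ℝ)
    (B : Matrix (Fin k ⊕ Fin k) (Fin n ⊕ Fin n) ℝ) :
    ((sympInv A)ᵀ * B).trace = (Aᵀ * sympInv B).trace := by
  simp only [sympInv, transpose_mul, transpose_transpose, Jmat_transpose, transpose_neg,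
    Matrix.neg_mul, Matrix.mul_neg, neg_neg, Matrix.mul_assoc]
  rw [trace_neg, trace_neg, ← trace_transpose (Aᵀ * _)]
  simp only [transpose_mul, transpose_transpose, Jmat_transpose, Matrix.neg_mul, Matrix.mul_neg,
    neg_neg, Matrix.mul_assoc]
  rw [← Matrix.mul_assoc (Jmat k), trace_mul_comm (Jmat k * B)]
  simp only [Matrix.mul_assoc]

theorem trace_transpose_sub_sympInv_mul_of_sympInv_eq_neg {n : ℕ}
    (B Y : Matrix (Fin n ⊕ Fin n) (Fin n ⊕ Fin n) ℝ) (hY : sympInv Y = -Y) :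
    ((B - sympInv B)ᵀ * Y).trace = 2 * (Bᵀ * Y).trace := by
  rw [transpose_sub, Matrix.sub_mul, trace_sub, trace_transpose_sympInv_mul, hY,
    Matrix.mul_neg, trace_neg]
  ring

theorem stmt_17 (n : ℕ) (M G gradf : Matrix (Fin n ⊕ Fin n) (Fin n ⊕ Fin n) ℝ)
    (hM : sympInv M * M = 1)
    (hG : G = gradf * Mᵀ * M + Jmat n * M * gradfᵀ * Jmat n * M) :
    ∀ Ω : Matrix (Fin n ⊕ Fin n) (Fin n ⊕ Fin n) ℝ, sympInv Ω = -Ω →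
      (1/2 : ℝ) * ((G * sympInv M)ᵀ * (M * Ω * sympInv M)).trace
        = (gradfᵀ * (M * Ω)).trace := by
  intro Ω hΩ
  have hMM : M * sympInv M = 1 := mul_eq_one_comm.mp hM
  have hB : sympInv (gradf * Mᵀ) = -(Jmat n * M * gradfᵀ * Jmat n) := by
    simp only [sympInv, transpose_mul, transpose_transpose, Jmat_transpose, Matrix.neg_mul,
      Matrix.mul_assoc]
  have hGM : G * sympInv M = gradf * Mᵀ - sympInv (gradf * Mᵀ) := by
    rw [hB, sub_neg_eq_add, hG, Matrix.add_mul]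
    simp only [Matrix.mul_assoc, hMM, Matrix.mul_one]
  have hY : sympInv (M * Ω * sympInv M) = -(M * Ω * sympInv M) := by
    rw [sympInv_mul, sympInv_mul, sympInv_sympInv, hΩ, Matrix.neg_mul, Matrix.mul_neg,
      Matrix.mul_assoc]
  rw [hGM, trace_transpose_sub_sympInv_mul_of_sympInv_eq_neg _ _ hY, ← mul_assoc,
    one_div_mul_cancel two_ne_zero, one_mul, transpose_mul, transpose_transpose,
    Matrix.mul_assoc, trace_mul_comm]
  simp only [Matrix.mul_assoc, hM, Matrix.mul_one]
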